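/- Under the factorization hypotheses for ℕ^(1) and ℕ^(2) (as in the GPT matrix factorizations), the modified tensor Ñ^(2) := 𝕄 ℕ^(2), where 𝕄 = (I − \overline{ℕ^(1/2)} ℕ^(1/2))(I − 4λ² \overline{ℕ^(1/2)} ℕ^(1/2))^{−1} and ℕ^(1/2) = ℕ^(1)(ℕ^(2))^{−1}, satisfies the identity Ñ^(2) = (2π/λ) P̄^{−1} γ^{2𝒩} 𝒩 (Pᵀ)^{−1}. -/
import Mathlib


/-- **The modified GPT `Ñ^{(2)}` (Lemma: `Ñ^{(2)} = (2π/λ) P̄⁻¹ γ^{2𝒩} 𝒩 (Pᵀ)⁻¹`).**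
In the algebra of semi-infinite matrices (an abstract `ℂ`-algebra `R` with entrywise
conjugation `bar`), under the GPT factorizations for `ℕ^{(1)}` and `ℕ^{(2)}`, the modified
tensor `Ñ^{(2)} = 𝕄 ℕ^{(2)}`, with
`𝕄 = (I − \bar{ℕ^{(1/2)}} ℕ^{(1/2)})(I − 4λ² \bar{ℕ^{(1/2)}} ℕ^{(1/2)})⁻¹` and
`ℕ^{(1/2)} = ℕ^{(1)}(ℕ^{(2)})⁻¹`, satisfies `Ñ^{(2)} = (2π/λ) P̄⁻¹ γ^{2𝒩} 𝒩 (Pᵀ)⁻¹`. -/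
theorem modified_N2_formula
    (R : Type*) [Ring R] [Algebra ℂ R]
    (bar : R →+* R)
    (hbar2 : ∀ x : R, bar (bar x) = x)
    (hbarsmul : ∀ (z : ℂ) (x : R), bar (z • x) = (starRingEnd ℂ z) • bar x)
    (lam : ℝ) (hlam : 1 / 2 < |lam|)
    (N1 N2 N2i P Pi Pb Pbi Pt Pti Dγ Dγi Nh Nhi G Gb Ki W : R)
    (hbarP : bar P = Pb) (hbarG : bar G = Gb)
    (hbarDγ : bar Dγ = Dγ) (hbarNh : bar Nh = Nh)
    (hP : P * Pi = 1 ∧ Pi * P = 1)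
    (hPb : Pb * Pbi = 1 ∧ Pbi * Pb = 1)
    (hPt : Pt * Pti = 1 ∧ Pti * Pt = 1)
    (hDγ : Dγ * Dγi = 1 ∧ Dγi * Dγ = 1)
    (hNh : Nh * Nhi = 1 ∧ Nhi * Nh = 1)
    (hN2 : N2 * N2i = 1 ∧ N2i * N2 = 1)
    (hcomm : Dγ * Nh = Nh * Dγ)
    (hKi : ((4 * (lam : ℂ) ^ 2) • (1 : R) - Gb * G) * Ki = 1 ∧
           Ki * ((4 * (lam : ℂ) ^ 2) • (1 : R) - Gb * G) = 1)
    (hN1 : N1 = ((4 * Real.pi : ℝ) : ℂ) •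
      (Pi * (Dγ * Nh) * G * (1 + ((1 : ℂ) - 4 * (lam : ℂ) ^ 2) • Ki) * (Nh * Dγ) * Pti))
    (hN2e : N2 = ((8 * Real.pi * lam : ℝ) : ℂ) •
      (Pbi * (Dγ * Nh) * (1 + ((1 : ℂ) - 4 * (lam : ℂ) ^ 2) • Ki) * (Nh * Dγ) * Pti))
    (hW : ((1 : R) - (4 * (lam : ℂ) ^ 2) • (bar (N1 * N2i) * (N1 * N2i))) * W = 1 ∧
          W * ((1 : R) - (4 * (lam : ℂ) ^ 2) • (bar (N1 * N2i) * (N1 * N2i))) = 1) :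
    ((1 : R) - bar (N1 * N2i) * (N1 * N2i)) * W * N2
      = ((2 * Real.pi / lam : ℝ) : ℂ) • (Pbi * (Dγ * Dγ) * (Nh * Nh) * Pti) := by
  obtain ⟨hP1, hP2⟩ := hP
  obtain ⟨hPb1, hPb2⟩ := hPb
  obtain ⟨hPt1, hPt2⟩ := hPt
  obtain ⟨hDγ1, hDγ2⟩ := hDγ
  obtain ⟨hNh1, hNh2⟩ := hNh
  obtain ⟨hN21, hN22⟩ := hN2
  obtain ⟨hKi1, hKi2⟩ := hKi
  obtain ⟨hW1, hW2⟩ := hW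
  have hlamR : lam ≠ 0 := by
    intro h; rw [h] at hlam; norm_num at hlam
  have hlam0 : (lam : ℂ) ≠ 0 := Complex.ofReal_ne_zero.mpr hlamR
  -- cancellation lemmas
  have eP : ∀ x : R, P * (Pi * x) = x := fun x => by rw [← mul_assoc, hP1, one_mul]
  have ePi : ∀ x : R, Pi * (P * x) = x := fun x => by rw [← mul_assoc, hP2, one_mul]
  have ePb : ∀ x : R, Pb * (Pbi * x) = x := fun x => by rw [← mul_assoc, hPb1, one_mul]
  have ePbi : ∀ x : R, Pbi * (Pb * x) = x := fun x => by rw [← mul_assoc, hPb2, one_mul]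
  have ePt : ∀ x : R, Pt * (Pti * x) = x := fun x => by rw [← mul_assoc, hPt1, one_mul]
  have ePti : ∀ x : R, Pti * (Pt * x) = x := fun x => by rw [← mul_assoc, hPt2, one_mul]
  have eDγ : ∀ x : R, Dγ * (Dγi * x) = x := fun x => by rw [← mul_assoc, hDγ1, one_mul]
  have eDγi : ∀ x : R, Dγi * (Dγ * x) = x := fun x => by rw [← mul_assoc, hDγ2, one_mul]
  have eNh : ∀ x : R, Nh * (Nhi * x) = x := fun x => by rw [← mul_assoc, hNh1, one_mul]
  have eNhi : ∀ x : R, Nhi * (Nh * x) = x := fun x => by rw [← mul_assoc, hNh2, one_mul]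
  have eKi : ∀ x : R, ((4 * (lam : ℂ) ^ 2) • (1 : R) - Gb * G) * (Ki * x) = x :=
    fun x => by rw [← mul_assoc, hKi1, one_mul]
  have ecomm : ∀ x : R, Nh * (Dγ * x) = Dγ * (Nh * x) := fun x => by
    rw [← mul_assoc, ← hcomm, mul_assoc]
  -- Step 1 : X = N1 * N2i
  set c : ℂ := (lam : ℂ) with hc
  have key : (((2 * c)⁻¹) • (Pi * (Dγ * (Nh * (G * (Nhi * (Dγi * Pb))))))) * N2 = N1 := by
    rw [hN2e, hN1]
    simp only [mul_add, add_mul, mul_one, one_mul, smul_mul_assoc, mul_smul_comm,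
      smul_smul, mul_assoc, eP, ePi, ePb, ePbi, ePt, ePti, eDγ, eDγi, eNh, eNhi,
      smul_add]
    congr 2 <;> push_cast <;> field_simp <;> ring
  have hX : N1 * N2i = ((2 * c)⁻¹) • (Pi * (Dγ * (Nh * (G * (Nhi * (Dγi * Pb)))))) := by
    rw [← key, mul_assoc, hN21, mul_one]
  -- bar of inverses
  have hbarPi : bar Pi = Pbi := by
    have h1 : bar Pi * Pb = 1 := by rw [← hbarP, ← map_mul, hP2, map_one]
    calc bar Pi = bar Pi * (Pb * Pbi) := by rw [hPb1, mul_one]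
      _ = Pbi := by rw [← mul_assoc, h1, one_mul]
  have hbarNhi : bar Nhi = Nhi := by
    have h1 : bar Nhi * Nh = 1 := by rw [← hbarNh, ← map_mul, hNh2, map_one]
    calc bar Nhi = bar Nhi * (Nh * Nhi) := by rw [hNh1, mul_one]
      _ = Nhi := by rw [← mul_assoc, h1, one_mul]
  have hbarDγi : bar Dγi = Dγi := by
    have h1 : bar Dγi * Dγ = 1 := by rw [← hbarDγ, ← map_mul, hDγ2, map_one]
    calc bar Dγi = bar Dγi * (Dγ * Dγi) := by rw [hDγ1, mul_one]
      _ = Dγi := by rw [← mul_assoc, h1, one_mul]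
  have hconj : (starRingEnd ℂ) ((2 * c)⁻¹) = (2 * c)⁻¹ := by
    have h2 : (2 * c) = ((2 * lam : ℝ) : ℂ) := by rw [hc]; push_cast; ring
    rw [h2, ← Complex.ofReal_inv, Complex.conj_ofReal]
  have hbarPb : bar Pb = P := by rw [← hbarP, hbar2]
  have hbarX : bar (N1 * N2i)
      = ((2 * c)⁻¹) • (Pbi * (Dγ * (Nh * (Gb * (Nhi * (Dγi * P)))))) := by
    rw [hX, hbarsmul, hconj]
    simp only [map_mul, hbarPi, hbarDγ, hbarNh, hbarG, hbarNhi, hbarDγi, hbarPb]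
  -- bar X * X
  have hbarXX : bar (N1 * N2i) * (N1 * N2i)
      = ((4 * c ^ 2)⁻¹) • (Pbi * (Dγ * (Nh * (Gb * (G * (Nhi * (Dγi * Pb))))))) := by
    rw [hbarX, hX]
    simp only [smul_mul_assoc, mul_smul_comm, smul_smul, mul_assoc, eP, ePi, eDγ,
      eDγi, eNh, eNhi]
    congr 1
    field_simp
    ring
  have hinv : (4 * c ^ 2) * (4 * c ^ 2)⁻¹ = 1 := by
    field_simp
  have hinv' : (4 * c ^ 2)⁻¹ * (4 * c ^ 2) = 1 := by
    field_simp
  -- factorization of 1 - bar X X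
  have h6 : (1 : R) - bar (N1 * N2i) * (N1 * N2i)
      = ((4 * c ^ 2)⁻¹) • (Pbi * (Dγ * (Nh * (((4 * c ^ 2) • (1 : R) - Gb * G)
          * (Nhi * (Dγi * Pb)))))) := by
    rw [hbarXX]
    simp only [sub_mul, mul_sub, smul_mul_assoc, mul_smul_comm, one_mul, mul_one,
      smul_sub, smul_smul, mul_assoc, eNh, eNhi, eDγ, eDγi]
    rw [hinv', one_smul]
    rw [show Pbi * Pb = 1 from hPb2]
  -- W * (factorization of 1 - 4c² bar X X) = 1
  have h5 : (1 : R) - (4 * c ^ 2) • (bar (N1 * N2i) * (N1 * N2i))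
      = Pbi * (Dγ * (Nh * (((1 : R) - Gb * G) * (Nhi * (Dγi * Pb))))) := by
    rw [hbarXX, smul_smul, hinv, one_smul]
    simp only [sub_mul, mul_sub, one_mul, mul_assoc, eNh, eNhi, eDγ, eDγi]
    rw [show Pbi * Pb = 1 from hPb2]
  have h7 : W * (Pbi * (Dγ * (Nh * (((1 : R) - Gb * G) * (Nhi * (Dγi * Pb)))))) = 1 := by
    rw [← h5]; exact hW2
  have h8 : ∀ x : R, W * (Pbi * (Dγ * (Nh * (((1 : R) - Gb * G) * x))))
      = Pbi * (Dγ * (Nh * x)) := by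
    intro x
    have := congrArg (· * (Pbi * (Dγ * (Nh * x)))) h7
    simpa only [one_mul, mul_assoc, ePb, ePbi, eDγ, eDγi, eNh, eNhi] using this
  -- K = (1 - Gb G) * Ki
  have hKsplit : (1 : R) - Gb * G
      = ((4 * c ^ 2) • (1 : R) - Gb * G) + ((1 : ℂ) - 4 * c ^ 2) • (1 : R) := by
    rw [sub_smul, one_smul]; abel
  have hK : (1 : R) + ((1 : ℂ) - 4 * c ^ 2) • Ki = ((1 : R) - Gb * G) * Ki := by
    rw [hKsplit, add_mul, hKi1, smul_mul_assoc, one_mul]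
  -- W * N2
  have hWN2 : W * N2 = ((8 * Real.pi * lam : ℝ) : ℂ) •
      (Pbi * (Dγ * (Nh * (Ki * (Nh * (Dγ * Pti)))))) := by
    rw [hN2e, hK]
    rw [mul_smul_comm]
    congr 1
    simp only [mul_assoc]
    exact h8 (Ki * (Nh * (Dγ * Pti)))
  -- final
  rw [mul_assoc, hWN2, h6]
  simp only [smul_mul_assoc, mul_smul_comm, smul_smul, mul_assoc, ePb, ePbi, eDγ,
    eDγi, eNh, eNhi, eKi, ecomm]
  congr 1
  rw [hc]
  push_cast
  field_simp
  ring
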